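/- arXiv:1803.00763 — 2 statements merged into one kernel-verified Lean document; each statement's English description precedes it below -/
import Mathlib

section
/- Let p ∈ (1, ∞) with p ≠ 2, let n ∈ ℕ, let γ ≥ 1 be a real number, and let a = (λ₁, …, λₙ) ∈ S(ℓ_p^n) with λ₁ ≥ λ₂ ≥ … ≥ λₙ ≥ 0 and ∑_{j=1}^n λ_j^p = 1. Then the minimum over z ∈ {±e_j : 1 ≤ j ≤ n} of ‖a − γz‖_p^p equals (γ − λ₁)^p + 1 − λ₁^p, and this minimum is attained exactly at those z of the form z = e_i with λ_i = λ₁. -/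
open scoped ComplexConjugate
open ContinuousLinearMap

noncomputable section

/-- The `n`-th singular value (approximation number) of a bounded operator on a complex
Hilbert space: the distance from `a` to the set of operators of rank at most `n`.  For a
compact operator this coincides with the `(n+1)`-st eigenvalue of `|a| = (a^* a)^{1/2}`
arranged in decreasing order and repeated according to multiplicity. -/
def singularValue {H : Type*} [NormedAddCommGroup H] [InnerProductSpace ℂ H]
    (a : H →L[ℂ] H) (n : ℕ) : ℝ :=
  sInf {r : ℝ | ∃ F : H →L[ℂ] H, LinearMap.rank (F : H →ₗ[ℂ] H) ≤ (n : Cardinal) ∧ r = ‖a - F‖}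

/-- `‖a‖_p ^ p = ∑_n σ_n(a) ^ p`. -/
def schattenPow {H : Type*} [NormedAddCommGroup H] [InnerProductSpace ℂ H]
    (p : ℝ) (a : H →L[ℂ] H) : ℝ :=
  ∑' n : ℕ, singularValue a n ^ p

/-- The Schatten `p`-norm `‖a‖_p = (∑_n σ_n(a) ^ p)^{1/p}`. -/
def schattenNorm {H : Type*} [NormedAddCommGroup H] [InnerProductSpace ℂ H]
    (p : ℝ) (a : H →L[ℂ] H) : ℝ :=
  schattenPow p a ^ (1 / p)

/-- Membership in the `p`-Schatten–von Neumann class `C_p(H)`: compact operators whose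
singular value sequence is `p`-summable. -/
def MemCp {H : Type*} [NormedAddCommGroup H] [InnerProductSpace ℂ H]
    (p : ℝ) (a : H →L[ℂ] H) : Prop :=
  IsCompactOperator a ∧ Summable (fun n : ℕ => singularValue a n ^ p)

/-- Membership in the unit sphere `S(C_p(H))`. -/
def InSphereCp {H : Type*} [NormedAddCommGroup H] [InnerProductSpace ℂ H]
    (p : ℝ) (a : H →L[ℂ] H) : Prop :=
  MemCp p a ∧ schattenNorm p a = 1

/-- Orthogonality of operators: `a ⊥ b` iff `a b^* = 0` and `b^* a = 0`. -/
def OpOrth {H : Type*} [NormedAddCommGroup H] [InnerProductSpace ℂ H] [CompleteSpace H]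
    (a b : H →L[ℂ] H) : Prop :=
  a ∘L adjoint b = 0 ∧ adjoint b ∘L a = 0

/-- A minimal (rank-one) partial isometry: `e e^* e = e` and `e` has rank one. -/
def IsMinPartialIsometry {H : Type*} [NormedAddCommGroup H] [InnerProductSpace ℂ H]
    [CompleteSpace H] (e : H →L[ℂ] H) : Prop :=
  e ∘L adjoint e ∘L e = e ∧ LinearMap.rank (e : H →ₗ[ℂ] H) = 1

/-- The rank-one operator `η ⊗ ξ : ζ ↦ ⟨ζ, ξ⟩ η`. -/
def rankOne {H : Type*} [NormedAddCommGroup H] [InnerProductSpace ℂ H]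
    (η ξ : H) : H →L[ℂ] H :=
  (innerSL ℂ ξ).smulRight η

/-- Let `p ∈ (1,∞) \ {2}`, `γ ≥ 1`, and `a = (λ₁,…,λₙ) ∈ S(ℓ_p^n)` with
`λ₁ ≥ … ≥ λₙ ≥ 0` and `∑ λ_j^p = 1`.  The minimum over `z ∈ {±e_j}` of `‖a - γ z‖_p^p`
equals `(γ - λ₁)^p + 1 - λ₁^p`, attained exactly at `z = e_i` with `λ_i = λ₁`. -/
theorem stmt8 (p γ : ℝ) (hp1 : 1 < p) (hp2 : p ≠ 2) (hγ : 1 ≤ γ)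
    (n : ℕ) (hn : 0 < n)
    (lam : Fin n → ℝ) (hdec : Antitone lam) (hpos : ∀ j, 0 ≤ lam j)
    (hsum : ∑ j, lam j ^ p = 1) :
    IsLeast
      {x : ℝ | ∃ (i : Fin n) (ε : ℝ), (ε = 1 ∨ ε = -1) ∧
        x = ∑ j, |lam j - γ * (ε * (if j = i then 1 else 0))| ^ p}
      ((γ - lam ⟨0, hn⟩) ^ p + 1 - lam ⟨0, hn⟩ ^ p) ∧
    ∀ (i : Fin n) (ε : ℝ), (ε = 1 ∨ ε = -1) →
      ((∑ j, |lam j - γ * (ε * (if j = i then 1 else 0))| ^ p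
          = (γ - lam ⟨0, hn⟩) ^ p + 1 - lam ⟨0, hn⟩ ^ p)
        ↔ (ε = 1 ∧ lam i = lam ⟨0, hn⟩)) := by
  set L := lam ⟨0, hn⟩ with hLdef
  have hp0 : 0 < p := by linarith
  have hle : ∀ i : Fin n, lam i ≤ L := fun i => hdec (Fin.le_def.mpr (Nat.zero_le _))
  have hLpos : 0 < L := by
    rcases lt_or_eq_of_le (hpos ⟨0, hn⟩) with h | h
    · exact h
    · exfalso
      have hz : ∀ j, lam j = 0 := fun j => le_antisymm (h ▸ hle j) (hpos j)
      have hzz : ∑ j, lam j ^ p = 0 := by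
        apply Finset.sum_eq_zero; intro j _; rw [hz j, Real.zero_rpow hp0.ne']
      rw [hsum] at hzz; norm_num at hzz
  have hL1 : L ≤ 1 := by
    by_contra h
    push_neg at h
    have h1 : (1:ℝ) < L ^ p := (Real.one_lt_rpow_iff_of_pos hLpos).mpr (Or.inl ⟨h, hp0⟩)
    have h2 : L ^ p ≤ ∑ j, lam j ^ p :=
      Finset.single_le_sum (fun j _ => Real.rpow_nonneg (hpos j) p) (Finset.mem_univ _)
    rw [hsum] at h2; linarith
  have hLγ : L ≤ γ := hL1.trans hγ
  have key : ∀ (i : Fin n) (ε : ℝ),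
      ∑ j, |lam j - γ * (ε * (if j = i then 1 else 0))| ^ p
        = 1 - lam i ^ p + |lam i - γ * ε| ^ p := by
    intro i ε
    have hterm : ∀ j, |lam j - γ * (ε * (if j = i then 1 else 0))| ^ p
        = lam j ^ p + (if j = i then |lam i - γ * ε| ^ p - lam i ^ p else 0) := by
      intro j
      by_cases h : j = i
      · subst h; simp [mul_one]
      · simp [h, abs_of_nonneg (hpos j)]
    simp_rw [hterm]
    rw [Finset.sum_add_distrib, hsum, Finset.sum_ite_eq' Finset.univ i]
    simp
    linarith
  have mono_lt : ∀ s t : ℝ, 0 ≤ s → s < t → t ≤ γ →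
      (γ - t) ^ p - t ^ p < (γ - s) ^ p - s ^ p := by
    intro s t hs hst htγ
    have h1 : (γ - t) ^ p ≤ (γ - s) ^ p :=
      Real.rpow_le_rpow (by linarith) (by linarith) hp0.le
    have h2 : s ^ p < t ^ p := Real.rpow_lt_rpow hs hst hp0
    linarith
  have mono_le : ∀ s t : ℝ, 0 ≤ s → s ≤ t → t ≤ γ →
      (γ - t) ^ p - t ^ p ≤ (γ - s) ^ p - s ^ p := by
    intro s t hs hst htγ
    rcases eq_or_lt_of_le hst with rfl | h
    · exact le_rfl
    · exact (mono_lt s t hs h htγ).le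
  have neg_gt : ∀ i : Fin n, (γ - L) ^ p - L ^ p < (γ + lam i) ^ p - lam i ^ p := by
    intro i
    have h1 : lam i ^ p + γ ^ p ≤ (lam i + γ) ^ p := by
      have hγ0 : (0:ℝ) ≤ γ := by linarith
      have hnn := NNReal.add_rpow_le_rpow_add (lam i).toNNReal γ.toNNReal hp1.le
      have h' := NNReal.coe_le_coe.mpr hnn
      simpa [NNReal.coe_rpow, Real.coe_toNNReal _ (hpos i), Real.coe_toNNReal _ hγ0] using h'
    have h2 : (γ - L) ^ p < γ ^ p := Real.rpow_lt_rpow (by linarith) (by linarith) hp0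
    have h3 : 0 < L ^ p := Real.rpow_pos_of_pos hLpos p
    have e : lam i + γ = γ + lam i := by ring
    rw [e] at h1
    linarith
  constructor
  · constructor
    · refine ⟨⟨0, hn⟩, 1, Or.inl rfl, ?_⟩
      rw [key]
      rw [mul_one, abs_of_nonpos (by linarith : L - γ ≤ 0), neg_sub]
      linarith
    · rintro x ⟨i, ε, hε, rfl⟩
      rw [key]
      rcases hε with rfl | rfl
      · rw [mul_one, abs_of_nonpos (by linarith [hle i] : lam i - γ ≤ 0), neg_sub]
        have h := mono_le (lam i) L (hpos i) (hle i) hLγ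
        linarith
      · have e : lam i - γ * (-1) = γ + lam i := by ring
        rw [e, abs_of_nonneg (by linarith [hpos i])]
        linarith [neg_gt i]
  · intro i ε hε
    rw [key]
    constructor
    · intro hx
      rcases hε with rfl | rfl
      · refine ⟨rfl, ?_⟩
        by_contra hne
        have hlt : lam i < L := lt_of_le_of_ne (hle i) hne
        have h := mono_lt (lam i) L (hpos i) hlt hLγ
        rw [mul_one, abs_of_nonpos (by linarith [hle i] : lam i - γ ≤ 0), neg_sub] at hx
        linarith
      · exfalso
        have e : lam i - γ * (-1) = γ + lam i := by ring
        rw [e, abs_of_nonneg (by linarith [hpos i])] at hx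
        linarith [neg_gt i]
    · rintro ⟨rfl, hlam⟩
      rw [mul_one, abs_of_nonpos (by linarith [hle i] : lam i - γ ≤ 0), neg_sub, hlam]
      linarith
end
end

section
/- Let p ∈ (1, ∞) with p ≠ 2, let n ∈ ℕ, let γ ≥ 1 be a real number, and let λ₁ ≥ λ₂ ≥ … ≥ λₙ ≥ 0 satisfy ∑_{j=1}^n λ_j^p = 1. Define â ∈ S(ℓ_p^{2n}) by â = 2^{−1/p}(λ₁, …, λₙ, −λₙ, …, −λ₁), and for 1 ≤ i ≠ j ≤ 2n set s_{ij} = 2^{−1/p}(e_i − e_j). Then the minimum over all s_{ij} of ‖â − γ s_{ij}‖_p^p equals (γ − λ₁)^p + 1 − λ₁^p, and this minimum is attained exactly at those s_{ij} with 1 ≤ i ≤ n, n+1 ≤ j ≤ 2n, and â_i = 2^{−1/p}λ₁ and â_j = −2^{−1/p}λ₁ (that is, λ_i = λ_{2n+1−j} = λ₁). -/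
open scoped ComplexConjugate
open ContinuousLinearMap

noncomputable section

private lemma aux_mono {p γ : ℝ} (hp : 1 < p) (hγ : 0 < γ) :
    StrictMonoOn (fun u : ℝ => (γ + u) ^ p - u ^ p) (Set.Ici 0) := by
  have hcont : ContinuousOn (fun u : ℝ => (γ + u) ^ p - u ^ p) (Set.Ici 0) := by
    apply ContinuousOn.sub
    · exact ((continuous_const.add continuous_id).rpow_const
        (fun x => Or.inr (by linarith))).continuousOn
    · exact (continuous_id.rpow_const (fun x => Or.inr (by linarith))).continuousOn
  apply strictMonoOn_of_deriv_pos (convex_Ici 0) hcont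
  intro x hx
  rw [interior_Ici] at hx
  have hx0 : (0:ℝ) < x := hx
  have h1 : HasDerivAt (fun u : ℝ => (γ + u) ^ p) (p * (γ + x) ^ (p - 1) * 1) x := by
    have := (Real.hasDerivAt_rpow_const (x := γ + x) (Or.inr hp.le)).comp x
      ((hasDerivAt_id x).const_add γ)
    exact this
  have h2 : HasDerivAt (fun u : ℝ => u ^ p) (p * x ^ (p - 1)) x :=
    Real.hasDerivAt_rpow_const (Or.inr hp.le)
  rw [show (fun u : ℝ => (γ + u) ^ p - u ^ p) = ((fun u : ℝ => (γ + u) ^ p) - fun u => u ^ p) from rfl,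
    (h1.sub h2).deriv]
  have hlt : x ^ (p-1) < (γ + x) ^ (p-1) :=
    Real.rpow_lt_rpow hx0.le (by linarith) (by linarith)
  have hp0 : (0:ℝ) < p := by linarith
  nlinarith [hlt, hp0]

private lemma aux_anti {p γ : ℝ} (hp : 1 < p) (hγ : 0 < γ) :
    StrictAntiOn (fun x : ℝ => (γ - x) ^ p - |x| ^ p) (Set.Icc (-γ) γ) := by
  have key1 : ∀ x y : ℝ, 0 ≤ x → x < y → y ≤ γ →
      (γ - y) ^ p - |y| ^ p < (γ - x) ^ p - |x| ^ p := by
    intro x y hx hxy hy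
    rw [abs_of_nonneg hx, abs_of_nonneg (by linarith)]
    have h1 : (γ - y) ^ p < (γ - x) ^ p :=
      Real.rpow_lt_rpow (by linarith) (by linarith) (by linarith)
    have h2 : x ^ p < y ^ p := Real.rpow_lt_rpow hx hxy (by linarith)
    linarith
  have key2 : ∀ x y : ℝ, x < y → y ≤ 0 →
      (γ - y) ^ p - |y| ^ p < (γ - x) ^ p - |x| ^ p := by
    intro x y hxy hy
    rw [abs_of_nonpos hy, abs_of_nonpos (by linarith)]
    have := aux_mono hp hγ (Set.mem_Ici.2 (by linarith : (0:ℝ) ≤ -y))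
      (Set.mem_Ici.2 (by linarith : (0:ℝ) ≤ -x)) (by linarith : -y < -x)
    simp only at this
    have e1 : γ + -y = γ - y := by ring
    have e2 : γ + -x = γ - x := by ring
    rw [e1, e2] at this
    linarith
  intro x hx y hy hxy
  dsimp only
  rcases le_or_gt 0 x with h | h
  · exact key1 x y h hxy hy.2
  · rcases le_or_gt y 0 with h' | h'
    · exact key2 x y hxy h'
    · have t1 := key2 x 0 h le_rfl
      have t2 := key1 0 y le_rfl h' hy.2
      linarith

/-- Let `p ∈ (1,∞) \ {2}`, `γ ≥ 1`, `λ₁ ≥ … ≥ λₙ ≥ 0` with `∑ λ_j^p = 1`,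
and let `â = 2^{-1/p}(λ₁,…,λₙ,-λₙ,…,-λ₁) ∈ S(ℓ_p^{2n})`.  For `i ≠ j` set
`s_{ij} = 2^{-1/p}(e_i - e_j)`.  Then the minimum of `‖â - γ s_{ij}‖_p^p` over all `s_{ij}`
equals `(γ - λ₁)^p + 1 - λ₁^p`, attained exactly when `1 ≤ i ≤ n`, `n+1 ≤ j ≤ 2n`,
`â_i = 2^{-1/p} λ₁` and `â_j = -2^{-1/p} λ₁` (all indices here being `0`-based in Lean). -/
theorem stmt9 (p γ : ℝ) (hp1 : 1 < p) (hp2 : p ≠ 2) (hγ : 1 ≤ γ)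
    (n : ℕ) (hn : 0 < n)
    (lam : Fin n → ℝ) (hdec : Antitone lam) (hpos : ∀ j, 0 ≤ lam j)
    (hsum : ∑ j, lam j ^ p = 1)
    (ahat : Fin (2 * n) → ℝ)
    (hahat : ∀ k : Fin (2 * n), ahat k =
      if h : (k : ℕ) < n then (2 : ℝ) ^ (-(1 / p)) * lam ⟨(k : ℕ), h⟩
      else -((2 : ℝ) ^ (-(1 / p)) * lam ⟨2 * n - 1 - (k : ℕ), by omega⟩)) :
    IsLeast
      {x : ℝ | ∃ i j : Fin (2 * n), i ≠ j ∧
        x = ∑ k, |ahat k - γ * ((2 : ℝ) ^ (-(1 / p)) *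
          ((if k = i then 1 else 0) - (if k = j then 1 else 0)))| ^ p}
      ((γ - lam ⟨0, hn⟩) ^ p + 1 - lam ⟨0, hn⟩ ^ p) ∧
    ∀ i j : Fin (2 * n), i ≠ j →
      ((∑ k, |ahat k - γ * ((2 : ℝ) ^ (-(1 / p)) *
          ((if k = i then 1 else 0) - (if k = j then 1 else 0)))| ^ p
        = (γ - lam ⟨0, hn⟩) ^ p + 1 - lam ⟨0, hn⟩ ^ p)
      ↔ ((i : ℕ) < n ∧ n ≤ (j : ℕ) ∧
          ahat i = (2 : ℝ) ^ (-(1 / p)) * lam ⟨0, hn⟩ ∧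
          ahat j = -((2 : ℝ) ^ (-(1 / p)) * lam ⟨0, hn⟩))) := by
  have hp0 : (0:ℝ) < p := by linarith
  have hpne : p ≠ 0 := ne_of_gt hp0
  set c : ℝ := (2 : ℝ) ^ (-(1 / p)) with hcdef
  have hcpos : 0 < c := Real.rpow_pos_of_pos (by norm_num) _
  have hcp : c ^ p = 1 / 2 := by
    rw [hcdef, ← Real.rpow_mul (by norm_num : (0:ℝ) ≤ 2)]
    have : -(1 / p) * p = -1 := by field_simp
    rw [this, Real.rpow_neg_one]
    norm_num
  set l0 : ℝ := lam ⟨0, hn⟩ with hl0def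
  have hlam_le : ∀ j : Fin n, lam j ≤ l0 :=
    fun j => hdec (show (⟨0, hn⟩ : Fin n) ≤ j by simp [Fin.le_def])
  have hl0pos : 0 < l0 := by
    by_contra h
    push_neg at h
    have hz : ∀ j, lam j = 0 := fun j => le_antisymm (le_trans (hlam_le j) h) (hpos j)
    simp [hz, Real.zero_rpow hpne] at hsum
  have hl0le1 : l0 ≤ 1 := by
    have h1 : l0 ^ p ≤ 1 := by
      rw [← hsum]
      exact Finset.single_le_sum (f := fun j => lam j ^ p)
        (fun j _ => Real.rpow_nonneg (hpos j) p) (Finset.mem_univ (⟨0, hn⟩ : Fin n))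
    by_contra h
    push_neg at h
    have : (1:ℝ) ^ p < l0 ^ p := Real.rpow_lt_rpow (by norm_num) h hp0
    rw [Real.one_rpow] at this
    linarith
  set μ : Fin (2 * n) → ℝ := fun k =>
    if h : (k : ℕ) < n then lam ⟨(k : ℕ), h⟩ else -lam ⟨2 * n - 1 - (k : ℕ), by omega⟩
    with hμdef
  have hahat' : ∀ k, ahat k = c * μ k := by
    intro k
    rw [hahat k, hμdef]
    by_cases h : (k : ℕ) < n
    · simp [h]
    · simp [h]
  have hμ_le : ∀ k, μ k ≤ l0 := by
    intro k
    rw [hμdef]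
    by_cases h : (k : ℕ) < n
    · simpa [h] using hlam_le _
    · simp only [h, dif_neg, not_false_iff]
      have := hpos (⟨2 * n - 1 - (k : ℕ), by omega⟩ : Fin n)
      linarith
  have hμ_ge : ∀ k, -l0 ≤ μ k := by
    intro k
    rw [hμdef]
    by_cases h : (k : ℕ) < n
    · simp only [h, dif_pos]
      have := hpos (⟨(k : ℕ), h⟩ : Fin n)
      linarith
    · simp only [h, dif_neg, not_false_iff]
      have := hlam_le (⟨2 * n - 1 - (k : ℕ), by omega⟩ : Fin n)
      linarith
  set g : ℝ → ℝ := fun x => (γ - x) ^ p - |x| ^ p with hgdef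
  clear_value g
  -- characterization of g-minimum
  have hγ0 : (0:ℝ) < γ := by linarith
  have hmeml : l0 ∈ Set.Icc (-γ) γ := ⟨by linarith, by linarith⟩
  have hmem : ∀ x : ℝ, -l0 ≤ x → x ≤ l0 → x ∈ Set.Icc (-γ) γ :=
    fun x h1 h2 => ⟨by linarith, by linarith⟩
  have hgle : ∀ x : ℝ, -l0 ≤ x → x ≤ l0 → g l0 ≤ g x := by
    intro x h1 h2
    rw [hgdef]
    exact (aux_anti hp1 hγ0).antitoneOn (hmem x h1 h2) hmeml h2
  have hglt : ∀ x : ℝ, -l0 ≤ x → x < l0 → g l0 < g x := by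
    intro x h1 h2
    rw [hgdef]
    exact aux_anti hp1 hγ0 (hmem x h1 h2.le) hmeml h2
  -- the sum-to-one lemma
  set F : ℕ → ℝ := fun m => if h : m < n then lam ⟨m, h⟩ ^ p else 0 with hFdef
  have hFsum : ∑ m ∈ Finset.range n, F m = 1 := by
    rw [← Fin.sum_univ_eq_sum_range F n, ← hsum]
    apply Finset.sum_congr rfl
    intro i _
    rw [hFdef]
    simp [i.isLt, Fin.eta]
  have hbig : ∑ k : Fin (2 * n),
      (if (k : ℕ) < n then F (k : ℕ) else F (2 * n - 1 - (k : ℕ))) = 2 := by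
    rw [Fin.sum_univ_eq_sum_range (fun m => if m < n then F m else F (2 * n - 1 - m)) (2 * n)]
    rw [Finset.range_eq_Ico, ← Finset.sum_Ico_consecutive _ (Nat.zero_le n) (by omega : n ≤ 2 * n)]
    have e1 : ∑ m ∈ Finset.Ico 0 n, (if m < n then F m else F (2 * n - 1 - m))
        = ∑ m ∈ Finset.range n, F m := by
      rw [← Finset.range_eq_Ico]
      exact Finset.sum_congr rfl fun m hm => if_pos (Finset.mem_range.1 hm)
    have e2 : ∑ m ∈ Finset.Ico n (2 * n), (if m < n then F m else F (2 * n - 1 - m))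
        = ∑ m ∈ Finset.range n, F m := by
      rw [Finset.sum_Ico_eq_sum_range]
      have hcong : ∀ m ∈ Finset.range (2 * n - n),
          (if n + m < n then F (n + m) else F (2 * n - 1 - (n + m))) = F (n - 1 - m) := by
        intro m hm
        rw [if_neg (by omega)]
        congr 1
        omega
      rw [Finset.sum_congr rfl hcong, show 2 * n - n = n by omega, Finset.sum_range_reflect]
    rw [e1, e2, hFsum]
    norm_num
  have habs : ∀ k : Fin (2 * n), |ahat k| ^ p
      = (1 / 2) * (if (k : ℕ) < n then F (k : ℕ) else F (2 * n - 1 - (k : ℕ))) := by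
    intro k
    rw [hahat' k, abs_mul, abs_of_pos hcpos,
      Real.mul_rpow hcpos.le (abs_nonneg _), hcp, hμdef, hFdef]
    by_cases h : (k : ℕ) < n
    · simp only [h, dif_pos, if_pos]
      rw [abs_of_nonneg (hpos _)]
    · simp only [h, dif_neg, not_false_iff, if_neg]
      rw [abs_neg, abs_of_nonneg (hpos _)]
      rw [dif_pos (by omega : 2 * n - 1 - (k : ℕ) < n)]
  have hsum1 : ∑ k : Fin (2 * n), |ahat k| ^ p = 1 := by
    rw [Finset.sum_congr rfl fun k _ => habs k, ← Finset.mul_sum, hbig]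
    norm_num
  -- bounds needed in computation
  have hμγ : ∀ k, μ k ≤ γ := fun k => le_trans (hμ_le k) (by linarith)
  have hμγ' : ∀ k, -γ ≤ μ k := fun k => le_trans (by linarith) (hμ_ge k)
  -- the main sum computation
  have hS : ∀ i j : Fin (2 * n), i ≠ j →
      (∑ k, |ahat k - γ * (c *
          ((if k = i then 1 else 0) - (if k = j then 1 else 0)))| ^ p)
      = 1 + (1 / 2) * g (μ i) + (1 / 2) * g (-(μ j)) := by
    intro i j hij
    have hpt : ∀ k : Fin (2 * n),
        |ahat k - γ * (c * ((if k = i then 1 else 0) - (if k = j then 1 else 0)))| ^ p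
        = |ahat k| ^ p + ((if k = i then (1 / 2) * g (μ i) else 0)
          + (if k = j then (1 / 2) * g (-(μ j)) else 0)) := by
      intro k
      by_cases hki : k = i
      · subst hki
        rw [if_pos rfl, if_pos rfl, if_neg hij, if_neg hij]
        have e0 : ahat k - γ * (c * (1 - 0)) = c * (μ k - γ) := by
          rw [hahat' k]; ring
        have e1 : |ahat k - γ * (c * (1 - 0))| = c * (γ - μ k) := by
          rw [e0, abs_mul, abs_of_pos hcpos, abs_of_nonpos (by linarith [hμγ k] : μ k - γ ≤ 0)]
          ring
        rw [e1, Real.mul_rpow hcpos.le (by linarith [hμγ k] : (0:ℝ) ≤ γ - μ k), hcp]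
        rw [hahat' k, abs_mul, abs_of_pos hcpos,
          Real.mul_rpow hcpos.le (abs_nonneg _), hcp, hgdef]
        ring
      · by_cases hkj : k = j
        · subst hkj
          rw [if_neg hki, if_pos rfl, if_neg hki, if_pos rfl]
          have e1 : |ahat k - γ * (c * (0 - 1))| = c * (γ - -(μ k)) := by
            rw [hahat' k, show c * μ k - γ * (c * (0 - 1)) = c * (γ + μ k) by ring,
              abs_mul, abs_of_pos hcpos,
              abs_of_nonneg (by linarith [hμ_ge k] : (0:ℝ) ≤ γ + μ k)]
            ring
          rw [e1, Real.mul_rpow hcpos.le (by linarith [hμ_ge k] : (0:ℝ) ≤ γ - -(μ k)), hcp]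
          rw [hahat' k, abs_mul, abs_of_pos hcpos,
            Real.mul_rpow hcpos.le (abs_nonneg _), hcp, hgdef]
          simp only [abs_neg]
          ring
        · rw [if_neg hki, if_neg hkj, if_neg hki, if_neg hkj]
          norm_num
    rw [Finset.sum_congr rfl fun k _ => hpt k, Finset.sum_add_distrib,
      Finset.sum_add_distrib, hsum1, Finset.sum_ite_eq' Finset.univ i,
      Finset.sum_ite_eq' Finset.univ j]
    simp only [Finset.mem_univ, if_true]
    ring
  have hTE : (γ - l0) ^ p + 1 - l0 ^ p = 1 + (1 / 2) * g l0 + (1 / 2) * g l0 := by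
    rw [hgdef]
    simp only [abs_of_nonneg hl0pos.le]
    ring
  -- values of μ at the witness indices
  have hi0 : μ ⟨0, by omega⟩ = l0 := by
    rw [hμdef]
    simp only
    rw [dif_pos (show ((⟨0, by omega⟩ : Fin (2 * n)) : ℕ) < n by
      simp only [Fin.val_mk]; omega)]
  have hj0 : μ ⟨2 * n - 1, by omega⟩ = -l0 := by
    rw [hμdef]
    simp only
    rw [dif_neg (show ¬((⟨2 * n - 1, by omega⟩ : Fin (2 * n)) : ℕ) < n by
      simp only [Fin.val_mk]; omega)]
    rw [hl0def]
    congr 1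
    congr 1
    simp only [Fin.mk.injEq, Fin.val_mk]
    omega
  constructor
  · constructor
    · refine ⟨⟨0, by omega⟩, ⟨2 * n - 1, by omega⟩, ?_, ?_⟩
      · intro h
        rw [Fin.mk.injEq] at h
        omega
      · rw [hS _ _ (by intro h; rw [Fin.mk.injEq] at h; omega), hi0, hj0, neg_neg, hTE]
    · rintro x ⟨i, j, hij, rfl⟩
      rw [hS i j hij, hTE]
      have h1 := hgle (μ i) (hμ_ge i) (hμ_le i)
      have h2 := hgle (-(μ j)) (by linarith [hμ_le j]) (by linarith [hμ_ge j])
      linarith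
  · intro i j hij
    rw [hS i j hij]
    constructor
    · intro heq
      rw [hTE] at heq
      have h1 := hgle (μ i) (hμ_ge i) (hμ_le i)
      have h2 := hgle (-(μ j)) (by linarith [hμ_le j]) (by linarith [hμ_ge j])
      have hgi : g (μ i) = g l0 := by linarith
      have hgj : g (-(μ j)) = g l0 := by linarith
      have hμi : μ i = l0 := by
        by_contra h
        have := hglt (μ i) (hμ_ge i) (lt_of_le_of_ne (hμ_le i) h)
        linarith
      have hμj : μ j = -l0 := by
        by_contra h
        have := hglt (-(μ j)) (by linarith [hμ_le j])
          (lt_of_le_of_ne (by linarith [hμ_ge j]) (by intro hh; apply h; linarith))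
        linarith
      have hiln : (i : ℕ) < n := by
        by_contra h
        rw [hμdef] at hμi
        simp only [dif_neg h] at hμi
        have := hpos (⟨2 * n - 1 - (i : ℕ), by omega⟩ : Fin n)
        linarith
      have hjgen : n ≤ (j : ℕ) := by
        by_contra h
        push_neg at h
        rw [hμdef] at hμj
        simp only [dif_pos h] at hμj
        have := hpos (⟨(j : ℕ), h⟩ : Fin n)
        linarith
      exact ⟨hiln, hjgen, by rw [hahat' i, hμi], by rw [hahat' j, hμj]; ring⟩
    · rintro ⟨hi, hj, hai, haj⟩
      have hμi : μ i = l0 := by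
        have := hahat' i
        rw [hai] at this
        exact (mul_left_cancel₀ (ne_of_gt hcpos) this).symm
      have hμj : μ j = -l0 := by
        have := hahat' j
        rw [haj, show -(c * l0) = c * (-l0) by ring] at this
        exact (mul_left_cancel₀ (ne_of_gt hcpos) this).symm
      rw [hμi, hμj, neg_neg, hTE]
end
end
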